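/- For every m < 1, the derivative of the logarithmic derivative of the complete elliptic integral of the first kind satisfies (K'/K)'(m) ≥ 2 (K'(m)/K(m))², and in particular (K'/K)'(m) > 0. -/

import Mathlib

/-!
Differentiating under the integral sign gives `K^(k)(m) = (1/2)_k J_k(m)` with the moments
`J_k(m) = ∫₀¹ t^(2k) (1 - t²)^(-1/2) (1 - m t²)^(-k-1/2) dt`, so that `K'/K = J₁ / (2 J₀)` and
`(K'/K)' = (3 J₀ J₂ - J₁²) / (4 J₀²) = 2 (K'/K)² + 3 (J₀ J₂ - J₁²) / (4 J₀²)`.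
The last term is nonnegative by the Cauchy–Schwarz inequality `J₁² ≤ J₀ J₂`, the integrand of
`J₁` being the geometric mean of those of `J₀` and `J₂`.
-/

/-- The complete elliptic integral of the first kind,
`K(m) = ∫₀¹ dζ / √((1-ζ²)(1-mζ²))`, defined for `m < 1`. -/
noncomputable def ellipticK (m : ℝ) : ℝ :=
  ∫ ζ in (0:ℝ)..1, 1 / Real.sqrt ((1 - ζ ^ 2) * (1 - m * ζ ^ 2))

open MeasureTheory Set

theorem sq_integral_le_integral_mul_integral {α : Type*} [MeasurableSpace α] {μ : Measure α}
    {f g h : α → ℝ} (hf : Integrable f μ) (hg : Integrable g μ) (hh : Integrable h μ)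
    (hf0 : ∀ᵐ a ∂μ, 0 ≤ f a) (hg0 : ∀ᵐ a ∂μ, 0 ≤ g a) (hfg : ∀ᵐ a ∂μ, h a ^ 2 ≤ f a * g a) :
    (∫ a, h a ∂μ) ^ 2 ≤ (∫ a, f a ∂μ) * ∫ a, g a ∂μ := by
  have hquad (x : ℝ) :
      0 ≤ (∫ a, f a ∂μ) * (x * x) + (-2 * ∫ a, h a ∂μ) * x + ∫ a, g a ∂μ := by
    have hpt : ∀ᵐ a ∂μ, 0 ≤ f a * (x * x) + -2 * h a * x + g a := by
      filter_upwards [hf0, hg0, hfg] with a hfa hga hfga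
      rcases hfa.eq_or_lt with hfa | hfa
      · rw [← hfa] at hfga ⊢
        nlinarith [sq_nonneg (h a)]
      · nlinarith [sq_nonneg (f a * x - h a)]
    have hfh : Integrable (fun a => f a * (x * x) + -2 * h a * x) μ :=
      (hf.mul_const _).add ((hh.const_mul _).mul_const _)
    have := integral_nonneg_of_ae hpt
    rwa [integral_add hfh hg, integral_add (hf.mul_const _) ((hh.const_mul _).mul_const _),
      integral_mul_const, integral_mul_const, integral_const_mul] at this
  have := discrim_le_zero hquad
  rw [discrim] at this
  linarith

noncomputable def ellipticKIntegrand (k : ℕ) (m t : ℝ) : ℝ :=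
  t ^ (2 * k) / (√(1 - t ^ 2) * √(1 - m * t ^ 2) ^ (2 * k + 1))

noncomputable def ellipticKMoment (k : ℕ) (m : ℝ) : ℝ :=
  ∫ t in (0:ℝ)..1, ellipticKIntegrand k m t

lemma min_one_sub_le_one_sub_mul_sq {m x t : ℝ} (hx : x ≤ m) (ht₀ : 0 ≤ t) (ht₁ : t ≤ 1) :
    min (1 - m) 1 ≤ 1 - x * t ^ 2 := by
  rcases le_or_gt x 0 with h | h
  · exact (min_le_right _ _).trans (by nlinarith [sq_nonneg t])
  · exact (min_le_left _ _).trans (by nlinarith [mul_nonneg (sub_nonneg.2 ht₁) ht₀])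

lemma one_sub_mul_sq_pos {m t : ℝ} (hm : m < 1) (ht₀ : 0 ≤ t) (ht₁ : t ≤ 1) :
    0 < 1 - m * t ^ 2 :=
  (lt_min (sub_pos.2 hm) one_pos).trans_le (min_one_sub_le_one_sub_mul_sq le_rfl ht₀ ht₁)

lemma measurable_ellipticKIntegrand (k : ℕ) (m : ℝ) : Measurable (ellipticKIntegrand k m) := by
  unfold ellipticKIntegrand; fun_prop

lemma ellipticKIntegrand_nonneg (k : ℕ) (m : ℝ) {t : ℝ} (ht : 0 ≤ t) :
    0 ≤ ellipticKIntegrand k m t := by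
  unfold ellipticKIntegrand; positivity

lemma ellipticKIntegrand_le {m x t : ℝ} (k : ℕ) (hm : m < 1) (hx : x ≤ m) (ht : t ∈ Ioo 0 1) :
    ellipticKIntegrand k x t ≤ (1 - t) ^ (-(1 / 2) : ℝ) / √(min (1 - m) 1) ^ (2 * k + 1) := by
  obtain ⟨ht₀, ht₁⟩ := ht
  have hδ : 0 < √(min (1 - m) 1) := Real.sqrt_pos.2 (lt_min (sub_pos.2 hm) one_pos)
  have hden : √(1 - t) * √(min (1 - m) 1) ^ (2 * k + 1) ≤
      √(1 - t ^ 2) * √(1 - x * t ^ 2) ^ (2 * k + 1) := by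
    gcongr
    · nlinarith
    · exact min_one_sub_le_one_sub_mul_sq hx ht₀.le ht₁.le
  calc ellipticKIntegrand k x t
      ≤ 1 / (√(1 - t) * √(min (1 - m) 1) ^ (2 * k + 1)) :=
        div_le_div₀ zero_le_one (pow_le_one₀ ht₀.le ht₁.le)
          (mul_pos (Real.sqrt_pos.2 (by linarith)) (pow_pos hδ _)) hden
    _ = (1 - t) ^ (-(1 / 2) : ℝ) / √(min (1 - m) 1) ^ (2 * k + 1) := by
        rw [Real.rpow_neg (by linarith), ← Real.sqrt_eq_rpow, one_div, mul_inv, div_eq_mul_inv]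

lemma intervalIntegrable_one_sub_rpow_neg_half :
    IntervalIntegrable (fun t : ℝ => (1 - t) ^ (-(1 / 2) : ℝ)) volume 0 1 := by
  simpa using ((intervalIntegral.intervalIntegrable_rpow' (r := -(1 / 2)) (a := 0) (b := 1)
    (by norm_num)).comp_sub_left 1).symm

lemma intervalIntegrable_ellipticKIntegrand (k : ℕ) {m : ℝ} (hm : m < 1) :
    IntervalIntegrable (ellipticKIntegrand k m) volume 0 1 := by
  have hbound := intervalIntegrable_one_sub_rpow_neg_half.div_const
    (√(min (1 - m) 1) ^ (2 * k + 1))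
  rw [intervalIntegrable_iff_integrableOn_Ioo_of_le zero_le_one] at hbound ⊢
  refine hbound.mono' (measurable_ellipticKIntegrand k m).aestronglyMeasurable ?_
  filter_upwards [ae_restrict_mem measurableSet_Ioo] with t ht
  rw [Real.norm_of_nonneg (ellipticKIntegrand_nonneg k m ht.1.le)]
  exact ellipticKIntegrand_le k hm le_rfl ht

lemma ellipticKMoment_pos (k : ℕ) {m : ℝ} (hm : m < 1) : 0 < ellipticKMoment k m := by
  refine intervalIntegral.intervalIntegral_pos_of_pos_on
    (intervalIntegrable_ellipticKIntegrand k hm) (fun t ht => ?_) one_pos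
  obtain ⟨ht₀, ht₁⟩ := ht
  have hu : 0 < 1 - t ^ 2 := by nlinarith
  have hq := one_sub_mul_sq_pos hm ht₀.le ht₁.le
  unfold ellipticKIntegrand
  positivity

lemma hasDerivAt_ellipticKIntegrand (k : ℕ) {m t : ℝ} (hm : m < 1) (ht : t ∈ Ioo 0 1) :
    HasDerivAt (fun x => ellipticKIntegrand k x t)
      ((2 * k + 1) / 2 * ellipticKIntegrand (k + 1) m t) m := by
  have hu : 0 < √(1 - t ^ 2) := Real.sqrt_pos.2 (by nlinarith [ht.1, ht.2])
  have hq : 0 < 1 - m * t ^ 2 := one_sub_mul_sq_pos hm ht.1.le ht.2.le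
  have hs : 0 < √(1 - m * t ^ 2) := Real.sqrt_pos.2 hq
  have hlin : HasDerivAt (fun x : ℝ => 1 - x * t ^ 2) (-t ^ 2) m := by
    simpa using ((hasDerivAt_id m).mul_const (t ^ 2)).const_sub 1
  have hden := (((Real.hasDerivAt_sqrt hq.ne').comp m hlin).pow (2 * k + 1)).const_mul
    (√(1 - t ^ 2))
  have hquot : HasDerivAt (fun x => ellipticKIntegrand k x t) _ m :=
    (hasDerivAt_const m (t ^ (2 * k))).div hden (mul_pos hu (pow_pos hs _)).ne'
  convert hquot using 1
  simp only [ellipticKIntegrand, Function.comp_apply, Nat.add_sub_cancel]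
  push_cast
  generalize √(1 - m * t ^ 2) = s at hs ⊢
  field_simp
  ring

lemma hasDerivAt_ellipticKMoment (k : ℕ) {m : ℝ} (hm : m < 1) :
    HasDerivAt (ellipticKMoment k) ((2 * k + 1) / 2 * ellipticKMoment (k + 1) m) m := by
  obtain ⟨m', hmm', hm'⟩ := exists_between hm
  have key := intervalIntegral.hasDerivAt_integral_of_dominated_loc_of_deriv_le
    (F' := fun x t => (2 * k + 1) / 2 * ellipticKIntegrand (k + 1) x t)
    (bound := fun t => (2 * k + 1) / 2 *
      ((1 - t) ^ (-(1 / 2) : ℝ) / √(min (1 - m') 1) ^ (2 * (k + 1) + 1)))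
    (Iio_mem_nhds hmm')
    (.of_forall fun x => (measurable_ellipticKIntegrand k x).aestronglyMeasurable)
    (intervalIntegrable_ellipticKIntegrand k hm)
    ((measurable_ellipticKIntegrand (k + 1) m).aestronglyMeasurable.const_mul _)
    ?_ ((intervalIntegrable_one_sub_rpow_neg_half.div_const _).const_mul _) ?_
  · have := key.2
    rwa [intervalIntegral.integral_const_mul] at this
  all_goals
    filter_upwards [volume.ae_ne 1] with t ht₁ ht x hx
    rw [uIoc_of_le zero_le_one] at ht
    replace ht : t ∈ Ioo 0 1 := ⟨ht.1, ht.2.lt_of_ne ht₁⟩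
  · rw [Real.norm_of_nonneg (by have := ellipticKIntegrand_nonneg (k + 1) x ht.1.le; positivity)]
    exact mul_le_mul_of_nonneg_left (ellipticKIntegrand_le (k + 1) hm' (le_of_lt hx) ht)
      (by positivity)
  · exact hasDerivAt_ellipticKIntegrand k (hx.trans hm') ht

lemma sq_ellipticKIntegrand_succ (k : ℕ) (m t : ℝ) :
    ellipticKIntegrand (k + 1) m t ^ 2 =
      ellipticKIntegrand k m t * ellipticKIntegrand (k + 2) m t := by
  simp only [ellipticKIntegrand]
  ring

lemma sq_ellipticKMoment_succ_le (k : ℕ) {m : ℝ} (hm : m < 1) :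
    ellipticKMoment (k + 1) m ^ 2 ≤ ellipticKMoment k m * ellipticKMoment (k + 2) m := by
  simp only [ellipticKMoment, intervalIntegral.integral_of_le zero_le_one]
  have hint (j : ℕ) := (intervalIntegrable_ellipticKIntegrand j hm).1
  refine sq_integral_le_integral_mul_integral (hint k) (hint (k + 2)) (hint (k + 1)) ?_ ?_
    (.of_forall fun t => (sq_ellipticKIntegrand_succ k m t).le)
  all_goals
    filter_upwards [ae_restrict_mem measurableSet_Ioc] with t ht
    exact ellipticKIntegrand_nonneg _ _ ht.1.le

lemma ellipticK_eq_ellipticKMoment_zero : ellipticK = ellipticKMoment 0 := by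
  ext m
  refine intervalIntegral.integral_congr fun t ht => ?_
  rw [uIcc_of_le zero_le_one] at ht
  have : 0 ≤ 1 - t ^ 2 := by nlinarith [ht.1, ht.2]
  simp [ellipticKIntegrand, Real.sqrt_mul this]

lemma hasDerivAt_ellipticK {m : ℝ} (hm : m < 1) :
    HasDerivAt ellipticK (ellipticKMoment 1 m / 2) m := by
  rw [ellipticK_eq_ellipticKMoment_zero]
  convert hasDerivAt_ellipticKMoment 0 hm using 1
  push_cast
  ring

lemma hasDerivAt_deriv_ellipticK {m : ℝ} (hm : m < 1) :
    HasDerivAt (deriv ellipticK) (3 / 4 * ellipticKMoment 2 m) m := by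
  have h := (hasDerivAt_ellipticKMoment 1 hm).div_const 2
  refine (h.congr_deriv (by push_cast; ring)).congr_of_eventuallyEq ?_
  filter_upwards [Iio_mem_nhds hm] with x hx
  exact (hasDerivAt_ellipticK hx).deriv

theorem deriv_logDeriv_ellipticK (m : ℝ) (hm : m < 1) :
    deriv (fun x : ℝ => deriv ellipticK x / ellipticK x) m ≥
      2 * (deriv ellipticK m / ellipticK m) ^ 2 ∧
    0 < deriv (fun x : ℝ => deriv ellipticK x / ellipticK x) m := by
  have hK₀ := ellipticKMoment_pos 0 hm
  have hK : ellipticK m = ellipticKMoment 0 m := by rw [ellipticK_eq_ellipticKMoment_zero]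
  have hquot : HasDerivAt (fun x => deriv ellipticK x / ellipticK x) _ m :=
    (hasDerivAt_deriv_ellipticK hm).div (hasDerivAt_ellipticK hm) (hK ▸ hK₀.ne')
  have hdecomp : deriv (fun x => deriv ellipticK x / ellipticK x) m =
      2 * (deriv ellipticK m / ellipticK m) ^ 2 + 3 / 4 *
        ((ellipticKMoment 0 m * ellipticKMoment 2 m - ellipticKMoment 1 m ^ 2) /
          ellipticKMoment 0 m ^ 2) := by
    rw [hquot.deriv, (hasDerivAt_ellipticK hm).deriv, hK]
    field_simp
    ring
  have hge : deriv (fun x => deriv ellipticK x / ellipticK x) m ≥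
      2 * (deriv ellipticK m / ellipticK m) ^ 2 := by
    have := sub_nonneg.2 (sq_ellipticKMoment_succ_le 0 hm)
    rw [hdecomp]
    exact le_add_of_nonneg_right (by positivity)
  refine ⟨hge, lt_of_lt_of_le ?_ hge⟩
  have hK₁ := ellipticKMoment_pos 1 hm
  rw [(hasDerivAt_ellipticK hm).deriv, hK]
  positivity
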